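/- Every Hamiltonian cycle of the Möbius ladder M4 on 8 vertices that contains exactly two rungs contains two consecutive rungs, i.e. rungs {i,i+4} and {i+1,i+5} for some i (mod 8); consequently there are exactly four such cycles. -/

import Mathlib

open SimpleGraph

/-- The Möbius ladder on 8 vertices: cycle edges `{i, i+1}` and rungs `{i, i+4}`. -/
def M4 : SimpleGraph (Fin 8) :=
  SimpleGraph.fromRel (fun i j => j = i + 1 ∨ j = i + 4)

/-- An edge of `M4` is a rung if it has the form `{i, i+4}`. -/
def IsRung (e : Sym2 (Fin 8)) : Prop := ∃ i : Fin 8, e = s(i, i + 4)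

/-- An edge of `M4` is horizontal if it has the form `{i, i+1}`. -/
def IsHorizontal (e : Sym2 (Fin 8)) : Prop := ∃ i : Fin 8, e = s(i, i + 1)

/-- `E` is the edge set of a Hamiltonian cycle of `M4`. -/
def IsHamEdgeSet (E : Set (Sym2 (Fin 8))) : Prop :=
  ∃ (v : Fin 8) (w : M4.Walk v v), w.IsHamiltonianCycle ∧ E = {e | e ∈ w.edges}

instance : DecidableRel M4.Adj := fun a b =>
  decidable_of_iff (a ≠ b ∧ ((b = a + 1 ∨ b = a + 4) ∨ (a = b + 1 ∨ a = b + 4)))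
    (by rw [M4]; exact (SimpleGraph.fromRel_adj (fun i j => j = i + 1 ∨ j = i + 4) a b).symm)

instance : DecidablePred IsRung := fun e =>
  decidable_of_iff (∃ i : Fin 8, e = s(i, i + 4)) Iff.rfl

def Eall : Finset (Sym2 (Fin 8)) :=
  {s(0,1),s(1,2),s(2,3),s(3,4),s(4,5),s(5,6),s(6,7),s(7,0),s(0,4),s(1,5),s(2,6),s(3,7)}

lemma mem_Eall : ∀ a b : Fin 8, M4.Adj a b → s(a,b) ∈ Eall := by decide

def C1 : Finset (Sym2 (Fin 8)) := {s(1,2),s(2,3),s(3,4),s(5,6),s(6,7),s(7,0),s(0,4),s(1,5)}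
def C2 : Finset (Sym2 (Fin 8)) := {s(0,1),s(1,2),s(3,4),s(4,5),s(5,6),s(7,0),s(2,6),s(3,7)}
def C3 : Finset (Sym2 (Fin 8)) := {s(0,1),s(2,3),s(3,4),s(4,5),s(6,7),s(7,0),s(1,5),s(2,6)}
def C4 : Finset (Sym2 (Fin 8)) := {s(0,1),s(1,2),s(2,3),s(4,5),s(5,6),s(6,7),s(0,4),s(3,7)}

set_option maxRecDepth 10000 in
set_option synthInstance.maxHeartbeats 2000000 in
set_option synthInstance.maxSize 2000 in
set_option maxHeartbeats 4000000 in
lemma core : ∀ b0 b1 b2 b3 b4 b5 b6 b7 b8 b9 b10 b11 : Fin 2,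
    b0.val + b7.val + b8.val = 2 →
    b0.val + b1.val + b9.val = 2 →
    b1.val + b2.val + b10.val = 2 →
    b2.val + b3.val + b11.val = 2 →
    b3.val + b4.val + b8.val = 2 →
    b4.val + b5.val + b9.val = 2 →
    b5.val + b6.val + b10.val = 2 →
    b6.val + b7.val + b11.val = 2 →
    b8.val + b9.val + b10.val + b11.val = 2 →
    (([b0,b1,b2,b3,b4,b5,b6,b7,b8,b9,b10,b11] : List (Fin 2)) = [0,1,1,1,0,1,1,1,1,1,0,0] ∨
     [b0,b1,b2,b3,b4,b5,b6,b7,b8,b9,b10,b11] = [1,1,0,1,1,1,0,1,0,0,1,1] ∨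
     [b0,b1,b2,b3,b4,b5,b6,b7,b8,b9,b10,b11] = [1,0,1,1,1,0,1,1,0,1,1,0] ∨
     [b0,b1,b2,b3,b4,b5,b6,b7,b8,b9,b10,b11] = [1,1,1,0,1,1,1,0,1,0,0,1]) := by
  decide

/-- transfer a filter over `F` to a filter over an explicit finset -/
lemma filter_card_eq (F T : Finset (Sym2 (Fin 8))) (q : Sym2 (Fin 8) → Prop) [DecidablePred q]
    (h : ∀ e ∈ F, (q e ↔ e ∈ T)) : (F.filter q).card = (T.filter (· ∈ F)).card := by
  rw [Finset.filter_congr h]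
  congr 1
  ext e
  simp only [Finset.mem_filter]
  tauto

lemma card3 (a b c : Sym2 (Fin 8)) (F : Finset (Sym2 (Fin 8)))
    (hab : a ≠ b) (hac : a ≠ c) (hbc : b ≠ c) :
    (({a,b,c} : Finset (Sym2 (Fin 8))).filter (· ∈ F)).card =
      (if a ∈ F then 1 else 0) + (if b ∈ F then 1 else 0) + (if c ∈ F then 1 else 0) := by
  by_cases ha : a ∈ F <;> by_cases hb : b ∈ F <;> by_cases hc : c ∈ F <;>
    simp [Finset.filter_insert, Finset.filter_singleton, ha, hb, hc,
      Finset.card_insert_of_notMem, Finset.mem_insert, Finset.mem_singleton, hab, hac, hbc]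

lemma card4 (a b c d : Sym2 (Fin 8)) (F : Finset (Sym2 (Fin 8)))
    (hab : a ≠ b) (hac : a ≠ c) (had : a ≠ d) (hbc : b ≠ c) (hbd : b ≠ d) (hcd : c ≠ d) :
    (({a,b,c,d} : Finset (Sym2 (Fin 8))).filter (· ∈ F)).card =
      (if a ∈ F then 1 else 0) + (if b ∈ F then 1 else 0) + (if c ∈ F then 1 else 0)
        + (if d ∈ F then 1 else 0) := by
  by_cases ha : a ∈ F <;> by_cases hb : b ∈ F <;> by_cases hc : c ∈ F <;> by_cases hd : d ∈ F <;>
    simp [Finset.filter_insert, Finset.filter_singleton, ha, hb, hc, hd,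
      Finset.card_insert_of_notMem, Finset.mem_insert, Finset.mem_singleton,
      hab, hac, had, hbc, hbd, hcd]

lemma eall_deg : ∀ x : Fin 8, (Eall.filter (fun e => x ∈ e)).card = 3 := by decide

lemma rung_eall : ∀ e ∈ Eall, (IsRung e ↔
    e ∈ ({s(0,4),s(1,5),s(2,6),s(3,7)} : Finset (Sym2 (Fin 8)))) := by decide

lemma incid_eall : ∀ x : Fin 8, ∀ e ∈ Eall, ((x ∈ e) ↔
    e ∈ (({s(x,x+1), s(x-1,x), s(x,x+4)}) : Finset (Sym2 (Fin 8)))) := by decide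

/-- the degree-two property of a Hamiltonian cycle -/
lemma deg2 {v : Fin 8} {w : M4.Walk v v} (hw : w.IsHamiltonianCycle) (x : Fin 8) :
    (w.edges.toFinset.filter (fun e => x ∈ e)).card = 2 := by
  have htrail : w.IsTrail := hw.isCycle.isCircuit.isTrail
  have hnd : w.edges.Nodup := htrail.edges_nodup
  have hsub : ∀ e ∈ w.edges.toFinset, e ∈ Eall := by
    intro e he
    rw [List.mem_toFinset] at he
    have := w.edges_subset_edgeSet he
    induction e with
    | _ a b => exact mem_Eall a b ((SimpleGraph.mem_edgeSet M4).mp this)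
  -- card = countP
  have hc : (w.edges.toFinset.filter (fun e => x ∈ e)).card
      = w.edges.countP (fun e => decide (x ∈ e)) := by
    have hset : w.edges.toFinset.filter (fun e => x ∈ e)
        = (w.edges.filter (fun e => decide (x ∈ e))).toFinset := by
      ext e; simp [List.mem_filter]
    rw [hset, List.toFinset_card_of_nodup (hnd.filter _), List.countP_eq_length_filter]
  -- even
  have hev : Even (w.edges.countP (fun e => decide (x ∈ e))) := by
    have := htrail.even_countP_edges_iff x
    simpa using this
  -- ≤ 3
  have hle : (w.edges.toFinset.filter (fun e => x ∈ e)).card ≤ 3 := by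
    have h1 : w.edges.toFinset.filter (fun e => x ∈ e) ⊆ Eall.filter (fun e => x ∈ e) :=
      Finset.filter_subset_filter _ (fun e he => hsub e he)
    calc _ ≤ (Eall.filter (fun e => x ∈ e)).card := Finset.card_le_card h1
      _ = 3 := eall_deg x
  -- ≥ 1
  have hpos : 0 < w.edges.countP (fun e => decide (x ∈ e)) := by
    have hx : x ∈ w.support := hw.mem_support x
    have hperm := (w.rotate_edges x hx).perm
    rw [← hperm.countP_eq]
    have hlen : (w.rotate x hx).edges.length = 8 := by
      rw [(w.rotate_edges x hx).perm.length_eq, SimpleGraph.Walk.length_edges, hw.length_eq]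
      simp
    rcases hrot : w.rotate x hx with _ | ⟨hadj, q⟩
    · rw [hrot] at hlen; simp at hlen
    · rw [List.countP_pos_iff]
      exact ⟨_, List.mem_cons_self, by simp⟩
  rw [hc] at hle ⊢
  obtain ⟨k, hk⟩ := hev
  omega

abbrev ind (P : Prop) [Decidable P] : Fin 2 := if P then 1 else 0

lemma ind_val (P : Prop) [Decidable P] : (ind P).val = if P then 1 else 0 := by
  by_cases h : P <;> simp [ind, h]

lemma ind_one {P : Prop} [Decidable P] (h : ind P = 1) : P := by
  by_cases hp : P
  · exact hp
  · simp [ind, hp] at h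

lemma ind_zero {P : Prop} [Decidable P] (h : ind P = 0) : ¬ P := by
  by_cases hp : P
  · simp [ind, hp] at h
  · exact hp

/-- main characterization -/
lemma main_char (F : Finset (Sym2 (Fin 8)))
    (hsub : ∀ e ∈ F, e ∈ Eall)
    (hdeg : ∀ x : Fin 8, (F.filter (fun e => x ∈ e)).card = 2)
    (hrung : (F.filter IsRung).card = 2) :
    F = C1 ∨ F = C2 ∨ F = C3 ∨ F = C4 := by
  -- degree conditions in indicator form
  have hv : ∀ x : Fin 8, ∀ a b c : Sym2 (Fin 8), a ≠ b → a ≠ c → b ≠ c →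
      (∀ e ∈ Eall, ((x ∈ e) ↔ e ∈ ({a,b,c} : Finset (Sym2 (Fin 8))))) →
      (if a ∈ F then 1 else 0) + (if b ∈ F then 1 else 0) + (if c ∈ F then 1 else 0) = 2 := by
    intro x a b c hab hac hbc hiff
    rw [← card3 a b c F hab hac hbc,
      ← filter_card_eq F _ _ (fun e he => hiff e (hsub e he))]
    exact hdeg x
  have hr : (if s(0,4) ∈ F then 1 else 0) + (if s(1,5) ∈ F then 1 else 0)
      + (if s(2,6) ∈ F then 1 else 0) + (if s(3,7) ∈ F then 1 else 0) = 2 := by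
    rw [← card4 s(0,4) s(1,5) s(2,6) s(3,7) F (by decide) (by decide) (by decide)
      (by decide) (by decide) (by decide),
      ← filter_card_eq F _ _ (fun e he => rung_eall e (hsub e he))]
    exact hrung
  have h0 := hv 0 s(0,1) s(7,0) s(0,4) (by decide) (by decide) (by decide) (by decide)
  have h1 := hv 1 s(0,1) s(1,2) s(1,5) (by decide) (by decide) (by decide) (by decide)
  have h2 := hv 2 s(1,2) s(2,3) s(2,6) (by decide) (by decide) (by decide) (by decide)
  have h3 := hv 3 s(2,3) s(3,4) s(3,7) (by decide) (by decide) (by decide) (by decide)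
  have h4 := hv 4 s(3,4) s(4,5) s(0,4) (by decide) (by decide) (by decide) (by decide)
  have h5 := hv 5 s(4,5) s(5,6) s(1,5) (by decide) (by decide) (by decide) (by decide)
  have h6 := hv 6 s(5,6) s(6,7) s(2,6) (by decide) (by decide) (by decide) (by decide)
  have h7 := hv 7 s(6,7) s(7,0) s(3,7) (by decide) (by decide) (by decide) (by decide)
  have hcore := core (ind (s(0,1) ∈ F)) (ind (s(1,2) ∈ F)) (ind (s(2,3) ∈ F))
    (ind (s(3,4) ∈ F)) (ind (s(4,5) ∈ F)) (ind (s(5,6) ∈ F)) (ind (s(6,7) ∈ F))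
    (ind (s(7,0) ∈ F)) (ind (s(0,4) ∈ F)) (ind (s(1,5) ∈ F)) (ind (s(2,6) ∈ F))
    (ind (s(3,7) ∈ F))
    (by rw [ind_val, ind_val, ind_val]; exact h0)
    (by rw [ind_val, ind_val, ind_val]; exact h1)
    (by rw [ind_val, ind_val, ind_val]; exact h2)
    (by rw [ind_val, ind_val, ind_val]; exact h3)
    (by rw [ind_val, ind_val, ind_val]; exact h4)
    (by rw [ind_val, ind_val, ind_val]; exact h5)
    (by rw [ind_val, ind_val, ind_val]; exact h6)
    (by rw [ind_val, ind_val, ind_val]; exact h7)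
    (by rw [ind_val, ind_val, ind_val, ind_val]; exact hr)
  have hF : Eall.filter (· ∈ F) = F := by
    rw [Finset.filter_mem_eq_inter]
    exact Finset.inter_eq_right.mpr (fun e he => hsub e he)
  rcases hcore with h | h | h | h <;>
    simp only [List.cons.injEq, and_true] at h <;>
    obtain ⟨a0, a1, a2, a3, a4, a5, a6, a7, a8, a9, a10, a11⟩ := h
  · refine Or.inl ?_
    have b0 := ind_zero a0; have b1 := ind_one a1; have b2 := ind_one a2
    have b3 := ind_one a3; have b4 := ind_zero a4; have b5 := ind_one a5
    have b6 := ind_one a6; have b7 := ind_one a7; have b8 := ind_one a8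
    have b9 := ind_one a9; have b10 := ind_zero a10; have b11 := ind_zero a11
    rw [← hF]
    simp only [Eall, Finset.filter_insert, Finset.filter_singleton, b0, b1, b2, b3, b4, b5, b6, b7, b8, b9, b10, b11, if_true, if_false, ite_true, ite_false]
    rfl
  · refine Or.inr (Or.inl ?_)
    have b0 := ind_one a0; have b1 := ind_one a1; have b2 := ind_zero a2
    have b3 := ind_one a3; have b4 := ind_one a4; have b5 := ind_one a5
    have b6 := ind_zero a6; have b7 := ind_one a7; have b8 := ind_zero a8
    have b9 := ind_zero a9; have b10 := ind_one a10; have b11 := ind_one a11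
    rw [← hF]
    simp only [Eall, Finset.filter_insert, Finset.filter_singleton, b0, b1, b2, b3, b4, b5, b6, b7, b8, b9, b10, b11, if_true, if_false, ite_true, ite_false]
    rfl
  · refine Or.inr (Or.inr (Or.inl ?_))
    have b0 := ind_one a0; have b1 := ind_zero a1; have b2 := ind_one a2
    have b3 := ind_one a3; have b4 := ind_one a4; have b5 := ind_zero a5
    have b6 := ind_one a6; have b7 := ind_one a7; have b8 := ind_zero a8
    have b9 := ind_one a9; have b10 := ind_one a10; have b11 := ind_zero a11
    rw [← hF]
    simp only [Eall, Finset.filter_insert, Finset.filter_singleton, b0, b1, b2, b3, b4, b5, b6, b7, b8, b9, b10, b11, if_true, if_false, ite_true, ite_false]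
    rfl
  · refine Or.inr (Or.inr (Or.inr ?_))
    have b0 := ind_one a0; have b1 := ind_one a1; have b2 := ind_one a2
    have b3 := ind_zero a3; have b4 := ind_one a4; have b5 := ind_one a5
    have b6 := ind_one a6; have b7 := ind_zero a7; have b8 := ind_one a8
    have b9 := ind_zero a9; have b10 := ind_zero a10; have b11 := ind_one a11
    rw [← hF]
    simp only [Eall, Finset.filter_insert, Finset.filter_singleton, b0, b1, b2, b3, b4, b5, b6, b7, b8, b9, b10, b11, if_true, if_false, ite_true, ite_false]
    rfl

/-- explicit Hamiltonian cycles -/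
def mkw (a b c d e f g : Fin 8)
    (h1 : M4.Adj 0 a) (h2 : M4.Adj a b) (h3 : M4.Adj b c) (h4 : M4.Adj c d)
    (h5 : M4.Adj d e) (h6 : M4.Adj e f) (h7 : M4.Adj f g) (h8 : M4.Adj g 0) :
    M4.Walk 0 0 :=
  .cons h1 (.cons h2 (.cons h3 (.cons h4 (.cons h5 (.cons h6 (.cons h7 (.cons h8 .nil)))))))

def W1 : M4.Walk 0 0 := mkw 4 3 2 1 5 6 7 (by decide) (by decide) (by decide) (by decide)
  (by decide) (by decide) (by decide) (by decide)
def W2 : M4.Walk 0 0 := mkw 1 2 6 5 4 3 7 (by decide) (by decide) (by decide) (by decide)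
  (by decide) (by decide) (by decide) (by decide)
def W3 : M4.Walk 0 0 := mkw 1 5 4 3 2 6 7 (by decide) (by decide) (by decide) (by decide)
  (by decide) (by decide) (by decide) (by decide)
def W4 : M4.Walk 0 0 := mkw 1 2 3 7 6 5 4 (by decide) (by decide) (by decide) (by decide)
  (by decide) (by decide) (by decide) (by decide)

lemma ham_of (w : M4.Walk 0 0) (h1 : w.edges.Nodup) (h2 : w ≠ .nil)
    (h3 : w.support.tail.Nodup) (h4 : ∀ a : Fin 8, w.support.tail.count a = 1) :
    w.IsHamiltonianCycle := by
  rw [SimpleGraph.Walk.isHamiltonianCycle_iff_isCycle_and_support_count_tail_eq_one]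
  exact ⟨⟨⟨⟨h1⟩, h2⟩, h3⟩, h4⟩

lemma W1_ham : W1.IsHamiltonianCycle :=
  ham_of _ (by decide) (by simp [W1, mkw]) (by decide) (by decide)
lemma W2_ham : W2.IsHamiltonianCycle :=
  ham_of _ (by decide) (by simp [W2, mkw]) (by decide) (by decide)
lemma W3_ham : W3.IsHamiltonianCycle :=
  ham_of _ (by decide) (by simp [W3, mkw]) (by decide) (by decide)
lemma W4_ham : W4.IsHamiltonianCycle :=
  ham_of _ (by decide) (by simp [W4, mkw]) (by decide) (by decide)

lemma W1_edges : {e | e ∈ W1.edges} = (↑C1 : Set (Sym2 (Fin 8))) := by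
  ext e
  have h : e ∈ W1.edges ↔ e ∈ C1 := by revert e; decide
  simpa using h
lemma W2_edges : {e | e ∈ W2.edges} = (↑C2 : Set (Sym2 (Fin 8))) := by
  ext e
  have h : e ∈ W2.edges ↔ e ∈ C2 := by revert e; decide
  simpa using h
lemma W3_edges : {e | e ∈ W3.edges} = (↑C3 : Set (Sym2 (Fin 8))) := by
  ext e
  have h : e ∈ W3.edges ↔ e ∈ C3 := by revert e; decide
  simpa using h
lemma W4_edges : {e | e ∈ W4.edges} = (↑C4 : Set (Sym2 (Fin 8))) := by
  ext e
  have h : e ∈ W4.edges ↔ e ∈ C4 := by revert e; decide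
  simpa using h

lemma coe_rung_count (C : Finset (Sym2 (Fin 8))) :
    {e ∈ (↑C : Set (Sym2 (Fin 8))) | IsRung e}.ncard = (C.filter IsRung).card := by
  rw [← Set.ncard_coe_finset]
  congr 1
  ext e
  simp [Finset.mem_filter]

lemma char_set (E : Set (Sym2 (Fin 8))) (h : IsHamEdgeSet E)
    (h2 : {e ∈ E | IsRung e}.ncard = 2) :
    E = ↑C1 ∨ E = ↑C2 ∨ E = ↑C3 ∨ E = ↑C4 := by
  obtain ⟨v, w, hw, rfl⟩ := h
  have hEF : {e | e ∈ w.edges} = (↑w.edges.toFinset : Set (Sym2 (Fin 8))) := by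
    ext e; simp
  rw [hEF] at h2 ⊢
  rw [coe_rung_count] at h2
  have hsub : ∀ e ∈ w.edges.toFinset, e ∈ Eall := by
    intro e he
    rw [List.mem_toFinset] at he
    have h' := w.edges_subset_edgeSet he
    induction e with
    | _ a b => exact mem_Eall a b ((SimpleGraph.mem_edgeSet M4).mp h')
  rcases main_char w.edges.toFinset hsub (deg2 hw) h2 with h | h | h | h <;>
    rw [h] <;> tauto

/-- Every Hamiltonian cycle of `M4` with exactly two rungs contains two consecutive
rungs, and there are exactly four such cycles. -/
theorem ham_cycle_two_rungs_consecutive_and_count :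
    (∀ E : Set (Sym2 (Fin 8)), IsHamEdgeSet E → {e ∈ E | IsRung e}.ncard = 2 →
      ∃ i : Fin 8, s(i, i + 4) ∈ E ∧ s(i + 1, i + 5) ∈ E) ∧
    {E : Set (Sym2 (Fin 8)) | IsHamEdgeSet E ∧ {e ∈ E | IsRung e}.ncard = 2}.ncard = 4 := by
  constructor
  · intro E h1 h2
    rcases char_set E h1 h2 with rfl | rfl | rfl | rfl
    · exact ⟨0, Finset.mem_coe.mpr (by decide), Finset.mem_coe.mpr (by decide)⟩
    · exact ⟨2, Finset.mem_coe.mpr (by decide), Finset.mem_coe.mpr (by decide)⟩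
    · exact ⟨1, Finset.mem_coe.mpr (by decide), Finset.mem_coe.mpr (by decide)⟩
    · exact ⟨3, Finset.mem_coe.mpr (by decide), Finset.mem_coe.mpr (by decide)⟩
  · have hset : {E : Set (Sym2 (Fin 8)) | IsHamEdgeSet E ∧ {e ∈ E | IsRung e}.ncard = 2}
        = {(↑C1 : Set (Sym2 (Fin 8))), ↑C2, ↑C3, ↑C4} := by
      ext E
      simp only [Set.mem_setOf_eq, Set.mem_insert_iff, Set.mem_singleton_iff]
      constructor
      · rintro ⟨h1, h2⟩; exact char_set E h1 h2
      · rintro (rfl | rfl | rfl | rfl)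
        · exact ⟨⟨0, W1, W1_ham, W1_edges.symm⟩, by rw [coe_rung_count]; decide⟩
        · exact ⟨⟨0, W2, W2_ham, W2_edges.symm⟩, by rw [coe_rung_count]; decide⟩
        · exact ⟨⟨0, W3, W3_ham, W3_edges.symm⟩, by rw [coe_rung_count]; decide⟩
        · exact ⟨⟨0, W4, W4_ham, W4_edges.symm⟩, by rw [coe_rung_count]; decide⟩
    rw [hset]
    have d12 : (↑C1 : Set (Sym2 (Fin 8))) ≠ ↑C2 := fun h =>
      absurd (Finset.coe_inj.mp h) (by decide)
    have d13 : (↑C1 : Set (Sym2 (Fin 8))) ≠ ↑C3 := fun h =>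
      absurd (Finset.coe_inj.mp h) (by decide)
    have d14 : (↑C1 : Set (Sym2 (Fin 8))) ≠ ↑C4 := fun h =>
      absurd (Finset.coe_inj.mp h) (by decide)
    have d23 : (↑C2 : Set (Sym2 (Fin 8))) ≠ ↑C3 := fun h =>
      absurd (Finset.coe_inj.mp h) (by decide)
    have d24 : (↑C2 : Set (Sym2 (Fin 8))) ≠ ↑C4 := fun h =>
      absurd (Finset.coe_inj.mp h) (by decide)
    have d34 : (↑C3 : Set (Sym2 (Fin 8))) ≠ ↑C4 := fun h =>
      absurd (Finset.coe_inj.mp h) (by decide)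
    rw [Set.ncard_insert_of_notMem (by simp [d12, d13, d14])
        (((Set.finite_singleton _).insert _).insert _),
      Set.ncard_insert_of_notMem (by simp [d23, d24]) ((Set.finite_singleton _).insert _),
      Set.ncard_insert_of_notMem (by simp [d34]) (Set.finite_singleton _),
      Set.ncard_singleton]
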